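/- arXiv:2411.18581 — 3 statements merged into one kernel-verified Lean document; each statement's English description precedes it below -/
import Mathlib

section
/- Let G be the h×n grid graph with h ≤ n, and let C be any configuration on G with maximum displacement d_max = max_v dist_G(v, C(v)). Then there exists a sequence of at most 2·d_max + 2h matchings solving the instance (G,C). In particular, since d_max ≤ OPT, there is always a solution of length at most 2·OPT + 2h. -/
/-- A matching of the graph `G`, encoded as an involution of the vertex set that
moves vertices only along edges of `G`. -/
def IsMatchingPerm {V : Type*} (G : SimpleGraph V) (m : V → V) : Prop :=
  Function.Involutive m ∧ ∀ v, m v = v ∨ G.Adj v (m v)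

/-- The configuration obtained from `C` by applying the sequence of matchings
`ms = [M₁, …, M_k]` (with `M₁` applied first):  `M_k ⋯ M₁ C = C ∘ m₁ ∘ ⋯ ∘ m_k`,
where `(M C)(v) = C (m v)`. -/
def routeSeq {V : Type*} (C : V → V) (ms : List (V → V)) : V → V :=
  C ∘ ms.foldr (· ∘ ·) id

/-- The sequence of matchings `ms = (M₁, …, M_k)` solves the instance `(G, C)`,
i.e. `M_k ⋯ M₁ C = Id`. -/
def Solves {V : Type*} (G : SimpleGraph V) (C : V → V) (ms : List (V → V)) : Prop :=
  (∀ m ∈ ms, IsMatchingPerm G m) ∧ routeSeq C ms = id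

/-- The `h × n` grid graph on vertices `Fin h × Fin n` (row, column; 0-indexed), with
edges between vertices at Euclidean distance 1. -/
def gridGraph (h n : ℕ) : SimpleGraph (Fin h × Fin n) :=
  SimpleGraph.fromRel fun u v =>
    (u.1 = v.1 ∧ u.2.val + 1 = v.2.val) ∨ (u.2 = v.2 ∧ u.1.val + 1 = v.1.val)

/-!
Every token first moves inside its column, then inside its row, then inside its column again.
Give each token `v` a row `φ v` so that tokens sharing a column, or sharing a destination column,
get distinct rows; this is König's theorem that the `h`-regular bipartite multigraph joining each
token's column to its destination column is `h`-edge-colourable. Then the three phases are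
permutations of the columns, of the rows and of the columns, each routed in parallel by odd–even
transposition sort: a column phase takes `h` rounds, and the row phase `2 d_max` rounds, since
every token changes its column by at most `d_max`.

The bound `2d` for a permutation of a path moving no token by more than `d` comes from the
`0`–`1` principle: thresholding at any value gives a `0`–`1` sequence whose ones lie at positions
`≥ A` and whose zeros lie at positions `< B` with `B - A ≤ 2d`, and odd–even transposition sort
sorts such a sequence in `B - A` rounds, as a deadline invariant on the zeros shows.
-/

open Finset Function SimpleGraph

section Routing

variable {V : Type*}

lemma routeSeq_nil (C : V → V) : routeSeq C [] = C := rfl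

lemma routeSeq_cons (C m : V → V) (l : List (V → V)) :
    routeSeq C (m :: l) = routeSeq (C ∘ m) l := rfl

lemma routeSeq_append (C : V → V) (l₁ l₂ : List (V → V)) :
    routeSeq C (l₁ ++ l₂) = routeSeq (routeSeq C l₁) l₂ := by
  induction l₁ generalizing C with
  | nil => rfl
  | cons m l ih => exact ih (C ∘ m)

lemma routeSeq_concat (C m : V → V) (l : List (V → V)) :
    routeSeq C (l.concat m) = routeSeq C l ∘ m := by
  rw [List.concat_eq_append, routeSeq_append]; rfl

lemma routeSeq_injective {C : V → V} (hC : Injective C) {l : List (V → V)}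
    (hl : ∀ m ∈ l, Injective m) : Injective (routeSeq C l) := by
  induction l generalizing C with
  | nil => exact hC
  | cons m l ih =>
    exact ih (hC.comp (hl m List.mem_cons_self)) fun m' hm' => hl m' (List.mem_cons_of_mem _ hm')

lemma routeSeq_map_conj {W : Type*} (e : V ≃ W) (C : V → V) (l : List (V → V)) :
    routeSeq (e ∘ C ∘ e.symm) (l.map fun m => e ∘ m ∘ e.symm) = e ∘ routeSeq C l ∘ e.symm := by
  induction l generalizing C with
  | nil => rfl
  | cons m l ih =>
    rw [List.map_cons, routeSeq_cons, routeSeq_cons, ← ih]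
    congr 1
    funext v
    simp

lemma IsMatchingPerm.injective {G : SimpleGraph V} {m : V → V} (hm : IsMatchingPerm G m) :
    Injective m :=
  hm.1.injective

lemma IsMatchingPerm.conj {W : Type*} {G : SimpleGraph V} {G' : SimpleGraph W} (e : G ≃g G')
    {m : V → V} (hm : IsMatchingPerm G m) : IsMatchingPerm G' (e ∘ m ∘ e.symm) := by
  refine ⟨fun v => by simp [hm.1 _], fun v => ?_⟩
  rcases hm.2 (e.symm v) with h | h
  · left; simp [h]
  · right
    simpa using e.map_adj_iff.mpr h

lemma Solves.append {G : SimpleGraph V} {C D : V → V} {l₁ l₂ : List (V → V)}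
    (h₁ : Solves G C l₁) (h₂ : Solves G D l₂) : Solves G (D ∘ C) (l₁ ++ l₂) := by
  refine ⟨fun m hm => (List.mem_append.mp hm).elim (h₁.1 m) (h₂.1 m), ?_⟩
  rw [routeSeq_append]
  change routeSeq (D ∘ routeSeq C l₁) l₂ = id
  rw [h₁.2]
  exact h₂.2

def SolvableIn (G : SimpleGraph V) (C : V → V) (T : ℕ) : Prop :=
  ∃ ms : Fin T → V → V, Solves G C (List.ofFn ms)

lemma SolvableIn.comp {G : SimpleGraph V} {C D : V → V} {T T' : ℕ} (hC : SolvableIn G C T)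
    (hD : SolvableIn G D T') : SolvableIn G (D ∘ C) (T + T') := by
  obtain ⟨ms, hms⟩ := hC
  obtain ⟨ms', hms'⟩ := hD
  exact ⟨Fin.append ms ms', by rw [List.ofFn_fin_append]; exact hms.append hms'⟩

lemma SolvableIn.map {W : Type*} {G : SimpleGraph V} {G' : SimpleGraph W} (e : G ≃g G')
    {C : V → V} {T : ℕ} (h : SolvableIn G C T) : SolvableIn G' (e ∘ C ∘ e.symm) T := by
  obtain ⟨ms, hm, hC⟩ := h
  refine ⟨fun t => e ∘ ms t ∘ e.symm, fun m hm' => ?_, ?_⟩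
  · obtain ⟨t, rfl⟩ := List.mem_ofFn.mp hm'
    exact (hm _ (List.mem_ofFn.mpr ⟨t, rfl⟩)).conj e
  · have := routeSeq_map_conj e.toEquiv C (List.ofFn ms)
    rw [List.map_ofFn, hC] at this
    exact this.trans (funext e.apply_symm_apply)

end Routing

section BoxProd

variable {α β : Type*}

lemma IsMatchingPerm.boxProd_left {G : SimpleGraph α} (H : SimpleGraph β) {m : β → α → α}
    (hm : ∀ b, IsMatchingPerm G (m b)) : IsMatchingPerm (G □ H) fun v => (m v.2 v.1, v.2) := by
  refine ⟨fun v => by simp [(hm v.2).1 v.1], fun v => ?_⟩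
  rcases (hm v.2).2 v.1 with h | h
  · exact Or.inl (Prod.ext h rfl)
  · exact Or.inr (Or.inl ⟨h, rfl⟩)

lemma routeSeq_boxProd_left {T : ℕ} (σ : β → α → α) (ms : β → Fin T → α → α) :
    routeSeq (fun v => (σ v.2 v.1, v.2)) (List.ofFn fun t v => (ms v.2 t v.1, v.2)) =
      fun v => (routeSeq (σ v.2) (List.ofFn (ms v.2)) v.1, v.2) := by
  induction T generalizing σ with
  | zero => rfl
  | succ T ih =>
    simp only [List.ofFn_succ, routeSeq_cons]
    exact ih (fun b => σ b ∘ ms b 0) fun b t => ms b t.succ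

lemma SolvableIn.boxProd_left {G : SimpleGraph α} (H : SimpleGraph β) {σ : β → α → α} {T : ℕ}
    (hσ : ∀ b, SolvableIn G (σ b) T) : SolvableIn (G □ H) (fun v => (σ v.2 v.1, v.2)) T := by
  choose ms hms using hσ
  refine ⟨fun t v => (ms v.2 t v.1, v.2), fun m hm => ?_, ?_⟩
  · obtain ⟨t, rfl⟩ := List.mem_ofFn.mp hm
    exact IsMatchingPerm.boxProd_left H fun b => (hms b).1 _ (List.mem_ofFn.mpr ⟨t, rfl⟩)
  · rw [routeSeq_boxProd_left]
    funext v
    simp [(hms v.2).2]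

lemma SolvableIn.boxProd_right (G : SimpleGraph α) {H : SimpleGraph β} {σ : α → β → β} {T : ℕ}
    (hσ : ∀ a, SolvableIn H (σ a) T) : SolvableIn (G □ H) (fun v => (v.1, σ v.1 v.2)) T :=
  (SolvableIn.boxProd_left G hσ).map (boxProdComm H G)

lemma SolvableIn.boxProd_of_snd_eq {G : SimpleGraph α} (H : SimpleGraph β) {C : α × β → α × β}
    {T : ℕ} (hC : ∀ v, (C v).2 = v.2) (h : ∀ b, SolvableIn G (fun a => (C (a, b)).1) T) :
    SolvableIn (G □ H) C T := by
  convert SolvableIn.boxProd_left H h using 1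
  exact funext fun v => Prod.ext rfl (hC v)

lemma SolvableIn.boxProd_of_fst_eq (G : SimpleGraph α) {H : SimpleGraph β} {C : α × β → α × β}
    {T : ℕ} (hC : ∀ v, (C v).1 = v.1) (h : ∀ a, SolvableIn H (fun b => (C (a, b)).2) T) :
    SolvableIn (G □ H) C T := by
  convert SolvableIn.boxProd_right G h using 1
  exact funext fun v => Prod.ext (hC v) rfl

end BoxProd

namespace OddEvenSort

/-- Round `t` of odd–even transposition sort on `x 0, …, x (k - 1)`: the pairs `(p, p + 1)`
with `p ≡ t [MOD 2]` are put in order. -/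
def compareRound (k t : ℕ) (x : ℕ → ℕ) (p : ℕ) : ℕ :=
  if p % 2 = t % 2 then
    if p + 1 < k then min (x p) (x (p + 1)) else x p
  else if 0 < p ∧ p < k then max (x (p - 1)) (x p) else x p

def zeroCount (x : ℕ → ℕ) (q : ℕ) : ℕ := #{p ∈ range q | x p = 0}

lemma zeroCount_zero (x : ℕ → ℕ) : zeroCount x 0 = 0 := rfl

lemma zeroCount_succ (x : ℕ → ℕ) (q : ℕ) :
    zeroCount x (q + 1) = zeroCount x q + if x q = 0 then 1 else 0 := by
  simp only [zeroCount, range_add_one, filter_insert]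
  split_ifs with h
  · rw [card_insert_of_notMem (by simp)]
  · rfl

lemma zeroCount_le (x : ℕ → ℕ) (q : ℕ) : zeroCount x q ≤ q :=
  (card_filter_le _ _).trans (card_range q).le

lemma zeroCount_eq_self {x : ℕ → ℕ} {q : ℕ} (h : ∀ p < q, x p = 0) : zeroCount x q = q := by
  rw [zeroCount, filter_true_of_mem (fun p hp => h p (mem_range.mp hp)), card_range]

lemma zeroCount_mono (x : ℕ → ℕ) : Monotone (zeroCount x) := fun _ _ h =>
  card_le_card (filter_subset_filter _ (range_subset_range.mpr h))

lemma zeroCount_eq_add_card_Ico (x : ℕ → ℕ) {a b : ℕ} (h : a ≤ b) :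
    zeroCount x b = zeroCount x a + #{p ∈ Ico a b | x p = 0} := by
  rw [zeroCount, zeroCount, range_eq_Ico, range_eq_Ico, ← Ico_union_Ico_eq_Ico (Nat.zero_le a) h,
    filter_union, card_union_of_disjoint
      (disjoint_filter_filter (Ico_disjoint_Ico_consecutive 0 a b))]

lemma compareRound_le_one {k t : ℕ} {x : ℕ → ℕ} (hx : ∀ p < k, x p ≤ 1) :
    ∀ p < k, compareRound k t x p ≤ 1 := by
  intro p hp
  have := hx p hp
  unfold compareRound
  split_ifs
  · exact (min_le_left _ _).trans this
  · exact this
  · exact max_le (hx _ (by omega)) this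
  · exact this

lemma zeroCount_compareRound {k t : ℕ} {x : ℕ → ℕ} (hx : ∀ p < k, x p ≤ 1) :
    ∀ q ≤ k, zeroCount (compareRound k t x) q = zeroCount x q +
      if 0 < q ∧ (q - 1) % 2 = t % 2 ∧ q < k ∧ x (q - 1) = 1 ∧ x q = 0 then 1 else 0 := by
  intro q
  induction q with
  | zero => simp [zeroCount_zero]
  | succ q ih =>
    intro hq
    rw [zeroCount_succ, zeroCount_succ, ih (by omega)]
    have h0 := hx q (by omega)
    have h1 : q + 1 < k → x (q + 1) ≤ 1 := hx (q + 1)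
    have h2 : 0 < q → x (q - 1) ≤ 1 := fun _ => hx (q - 1) (by omega)
    simp only [compareRound, Nat.add_sub_cancel]
    split_ifs <;> omega

lemma zeroCount_compareRound_succ {k t : ℕ} {x : ℕ → ℕ} (hx : ∀ p < k, x p ≤ 1) {q : ℕ}
    (hq : q < k) : zeroCount (compareRound k t x) (q + 1) = zeroCount x (q + 1) +
      if q % 2 = t % 2 ∧ q + 1 < k ∧ x q = 1 ∧ x (q + 1) = 0 then 1 else 0 := by
  rw [zeroCount_compareRound hx (q + 1) hq]
  simp only [Nat.add_sub_cancel, Nat.succ_pos, true_and]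

lemma zeroCount_compareRound_self {k t : ℕ} {x : ℕ → ℕ} (hx : ∀ p < k, x p ≤ 1) :
    zeroCount (compareRound k t x) k = zeroCount x k := by
  simp [zeroCount_compareRound hx k le_rfl]

/-- Deadline invariant of a `0`–`1` sequence `x` that is about to undergo round `t`, with `s`
rounds left: the `j`-th zero, at position `q`, is in its final place or satisfies
`(q + 1 - j) + (zeroCount x k - j) + [q ≡ t] ≤ s`, since it must still pass the ones to its left,
may be held up once by each zero to its right, and loses a round if its next comparator points the
wrong way. -/
def ZerosOnTime (k t s : ℕ) (x : ℕ → ℕ) : Prop :=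
  ∀ q < k, x q = 0 → zeroCount x (q + 1) = q + 1 ∨
    q + zeroCount x k + 1 + (if q % 2 = t % 2 then 1 else 0) ≤ s + 2 * zeroCount x (q + 1)

lemma ZerosOnTime.mono {k t s s' : ℕ} {x : ℕ → ℕ} (hs : s ≤ s') (h : ZerosOnTime k t s x) :
    ZerosOnTime k t s' x := fun q hq hq0 => (h q hq hq0).imp_right (by omega)

lemma zerosOnTime_of_window {k t A B : ℕ} {x : ℕ → ℕ} (hx : ∀ p < k, x p ≤ 1) (hB : B ≤ k)
    (hA : ∀ p < k, x p = 1 → A ≤ p) (hB' : ∀ p < k, x p = 0 → p < B) :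
    ZerosOnTime k t (B - A) x := by
  intro q hq hq0
  have hxA : ∀ p < A, p < k → x p = 0 := fun p hp hpk => by
    have := hx p hpk
    have := mt (hA p hpk)
    omega
  by_cases hAq : A ≤ q
  · right
    have hqB := hB' q hq hq0
    have hZq : zeroCount x (q + 1) = zeroCount x q + 1 := by rw [zeroCount_succ, if_pos hq0]
    have hZA : zeroCount x A ≤ zeroCount x q := zeroCount_mono x hAq
    rw [zeroCount_eq_self fun p hp => hxA p hp (by omega)] at hZA
    have hZk : zeroCount x k = zeroCount x B := by
      rw [zeroCount_eq_add_card_Ico x hB, card_eq_zero.mpr, Nat.add_zero]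
      exact filter_eq_empty_iff.mpr fun p hp hp0 => by
        have := hB' p (mem_Ico.mp hp).2 hp0
        have := (mem_Ico.mp hp).1
        omega
    have hZB : zeroCount x B ≤ zeroCount x (q + 1) + (B - (q + 1)) := by
      rw [zeroCount_eq_add_card_Ico x (show q + 1 ≤ B by omega)]
      exact Nat.add_le_add_left ((card_filter_le _ _).trans (Nat.card_Ico _ _).le) _
    split_ifs <;> omega
  · left
    exact zeroCount_eq_self fun p hp => hxA p (by omega) (by omega)

lemma ZerosOnTime.compareRound {k t s : ℕ} {x : ℕ → ℕ} (hx : ∀ p < k, x p ≤ 1)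
    (hinv : ZerosOnTime k t (s + 1) x) : ZerosOnTime k (t + 1) s (compareRound k t x) := by
  intro q hq hq0
  have hZk := zeroCount_compareRound_self (t := t) hx
  have hZq := zeroCount_compareRound_succ (t := t) hx hq
  have hZsucc := zeroCount_succ x q
  have hxq := hx q hq
  rw [hZk]
  unfold OddEvenSort.compareRound at hq0
  by_cases hpar : q % 2 = t % 2
  · rw [if_pos hpar] at hq0
    rw [if_neg (show ¬ q % 2 = (t + 1) % 2 by omega)]
    by_cases hxq0 : x q = 0
    · -- the zero stays at `q`; it spends its parity delay
      rw [if_neg (by omega)] at hZq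
      have hat := hinv q hq hxq0
      rw [if_pos hpar] at hat
      omega
    · -- a zero moves from `q + 1` to `q` and keeps the deadline it had there
      have hq1 : q + 1 < k := by by_contra h; rw [if_neg h] at hq0; exact hxq0 hq0
      rw [if_pos hq1] at hq0
      have hxq1 : x (q + 1) = 0 := by have := hx (q + 1) hq1; omega
      rw [if_pos ⟨hpar, hq1, by omega, hxq1⟩] at hZq
      have hZsucc' := zeroCount_succ x (q + 1)
      rw [if_pos hxq1] at hZsucc'
      have hnext := hinv (q + 1) hq1 hxq1
      rw [if_neg (by omega)] at hnext
      rw [if_neg hxq0] at hZsucc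
      have := zeroCount_le x q
      omega
  · rw [if_neg hpar] at hq0
    rw [if_pos (show q % 2 = (t + 1) % 2 by omega)]
    rw [if_neg (by tauto)] at hZq
    by_cases hq_pos : 0 < q
    · -- both `q - 1` and `q` hold zeros: the zero at `q` waits behind the one at `q - 1`,
      -- whose deadline it inherits
      rw [if_pos ⟨hq_pos, hq⟩] at hq0
      have hxq' : x (q - 1) = 0 := by omega
      have hprev := hinv (q - 1) (by omega) hxq'
      rw [Nat.sub_add_cancel hq_pos, if_pos (by omega)] at hprev
      rw [if_pos (show x q = 0 by omega)] at hZsucc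
      omega
    · rw [if_neg (fun h => hq_pos h.1)] at hq0
      obtain rfl : q = 0 := by omega
      rw [if_pos hq0] at hZsucc
      left
      simp [hZq, hZsucc, zeroCount_zero]

lemma ZerosOnTime.sorted {k t : ℕ} {x : ℕ → ℕ} (hx : ∀ p < k, x p ≤ 1)
    (h : ZerosOnTime k t 0 x) {p : ℕ} (hp : p + 1 < k) : x p ≤ x (p + 1) := by
  have := hx p (by omega)
  have := hx (p + 1) hp
  by_cases hx1 : x (p + 1) = 0
  · have hZ : zeroCount x (p + 1 + 1) = p + 1 + 1 := by
      have := zeroCount_le x (p + 1 + 1)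
      have := zeroCount_mono x (show p + 1 + 1 ≤ k by omega)
      rcases h (p + 1) hp hx1 with h' | h' <;> omega
    have h1 := zeroCount_succ x p
    have h2 := zeroCount_succ x (p + 1)
    have := zeroCount_le x p
    split_ifs at h1 h2 <;> omega
  · omega

def compareRounds (k : ℕ) (x : ℕ → ℕ) : ℕ → ℕ → ℕ
  | 0 => x
  | t + 1 => compareRound k t (compareRounds k x t)

lemma compareRounds_sorted {k T : ℕ} {x : ℕ → ℕ} (hx : ∀ p < k, x p ≤ 1)
    (h : ZerosOnTime k 0 T x) {p : ℕ} (hp : p + 1 < k) :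
    compareRounds k x T p ≤ compareRounds k x T (p + 1) := by
  have key : ∀ t ≤ T, (∀ p < k, compareRounds k x t p ≤ 1) ∧
      ZerosOnTime k t (T - t) (compareRounds k x t) := by
    intro t
    induction t with
    | zero => exact fun _ => ⟨hx, h⟩
    | succ t ih =>
      intro ht
      obtain ⟨hx', h'⟩ := ih (by omega)
      rw [show T - t = T - (t + 1) + 1 by omega] at h'
      exact ⟨compareRound_le_one hx', h'.compareRound hx'⟩
  obtain ⟨hx', h'⟩ := key T le_rfl
  rw [Nat.sub_self] at h'
  exact h'.sorted hx' hp

def swapRound (k t : ℕ) (a : ℕ → ℕ) (p : ℕ) : ℕ :=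
  if p % 2 = t % 2 ∧ p + 1 < k ∧ a (p + 1) < a p then p + 1
  else if 0 < p ∧ (p - 1) % 2 = t % 2 ∧ p < k ∧ a p < a (p - 1) then p - 1
  else p

lemma swapRound_swapRound (k t : ℕ) (a : ℕ → ℕ) (p : ℕ) :
    swapRound k t a (swapRound k t a p) = p := by
  by_cases h₁ : p % 2 = t % 2 ∧ p + 1 < k ∧ a (p + 1) < a p
  · have h₂ : 0 < p + 1 ∧ (p + 1 - 1) % 2 = t % 2 ∧ p + 1 < k ∧ a (p + 1) < a (p + 1 - 1) := by
      simpa using h₁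
    rw [show swapRound k t a p = p + 1 from if_pos h₁, swapRound, if_neg (by omega), if_pos h₂,
      Nat.add_sub_cancel]
  by_cases h₂ : 0 < p ∧ (p - 1) % 2 = t % 2 ∧ p < k ∧ a p < a (p - 1)
  · have h₁' : (p - 1) % 2 = t % 2 ∧ p - 1 + 1 < k ∧ a (p - 1 + 1) < a (p - 1) := by
      rw [Nat.sub_add_cancel h₂.1]; exact h₂.2
    rw [show swapRound k t a p = p - 1 from (if_neg h₁).trans (if_pos h₂), swapRound, if_pos h₁',
      Nat.sub_add_cancel h₂.1]
  · have e : swapRound k t a p = p := (if_neg h₁).trans (if_neg h₂)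
    rw [e, e]

lemma swapRound_lt {k t : ℕ} (a : ℕ → ℕ) {p : ℕ} (hp : p < k) : swapRound k t a p < k := by
  unfold swapRound
  split_ifs <;> omega

lemma swapRound_mem (k t : ℕ) (a : ℕ → ℕ) (p : ℕ) :
    swapRound k t a p = p ∨ p + 1 = swapRound k t a p ∨ swapRound k t a p + 1 = p := by
  unfold swapRound
  split_ifs <;> omega

lemma comp_swapRound {f : ℕ → ℕ} (hf : Monotone f) (k t : ℕ) (a : ℕ → ℕ) :
    f ∘ a ∘ swapRound k t a = compareRound k t (f ∘ a) := by
  funext p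
  have h₁ := @hf (a (p + 1)) (a p)
  have h₂ := @hf (a p) (a (p + 1))
  have h₃ := @hf (a p) (a (p - 1))
  have h₄ := @hf (a (p - 1)) (a p)
  simp only [Function.comp_apply, swapRound, compareRound]
  split_ifs <;> omega

def sortState (k : ℕ) (a : ℕ → ℕ) : ℕ → ℕ → ℕ
  | 0 => a
  | t + 1 => sortState k a t ∘ swapRound k t (sortState k a t)

lemma comp_sortState {f : ℕ → ℕ} (hf : Monotone f) (k : ℕ) (a : ℕ → ℕ) (t : ℕ) :
    f ∘ sortState k a t = compareRounds k (f ∘ a) t := by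
  induction t with
  | zero => rfl
  | succ t ih => rw [sortState, comp_swapRound hf, ih]; rfl

lemma sortState_sorted {k d T : ℕ} {a : ℕ → ℕ} (hd : ∀ p < k, a p ≤ p + d ∧ p ≤ a p + d)
    (hT : min k (2 * d) ≤ T) {p : ℕ} (hp : p + 1 < k) :
    sortState k a T p ≤ sortState k a T (p + 1) := by
  by_contra hlt
  set θ := sortState k a T p
  set f : ℕ → ℕ := fun v => if θ ≤ v then 1 else 0
  have hf : Monotone f := fun v w hvw => by simp only [f]; split_ifs <;> omega
  have hx : ∀ q < k, (f ∘ a) q ≤ 1 := fun q _ => by simp only [f, comp_apply]; split_ifs <;> omega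
  have hwindow : ZerosOnTime k 0 (min (θ + d) k - (θ - d)) (f ∘ a) := by
    refine zerosOnTime_of_window hx (min_le_right _ _) (fun q hq h1 => ?_) (fun q hq h0 => ?_)
    · have := hd q hq
      simp only [f, comp_apply] at h1
      split_ifs at h1
      omega
    · have := hd q hq
      simp only [f, comp_apply] at h0
      split_ifs at h0
      omega
  have hsorted := compareRounds_sorted hx (hwindow.mono (s' := T) (by omega)) hp
  rw [← comp_sortState hf] at hsorted
  simp only [f, comp_apply] at hsorted
  split_ifs at hsorted <;> omega

end OddEvenSort

lemma Fin.eq_id_of_injective_of_le_succ {k : ℕ} {b : Fin k → Fin k} (hb : Injective b)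
    (hle : ∀ p q : Fin k, (q : ℕ) = p + 1 → b p ≤ b q) : b = id := by
  rcases k with _ | k
  · exact funext fun p => p.elim0
  · have hmono : Monotone b :=
      Fin.monotone_iff_le_succ.mpr fun i => hle _ _ (by simp)
    exact congrArg DFunLike.coe (OrderHom.eq_id_of_injective ⟨b, hmono⟩ hb)

open OddEvenSort in
theorem solvableIn_pathGraph {k d T : ℕ} {σ : Fin k → Fin k} (hσ : Injective σ)
    (hd : ∀ p, (σ p : ℕ) ≤ p + d ∧ (p : ℕ) ≤ σ p + d) (hT : min k (2 * d) ≤ T) :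
    SolvableIn (pathGraph k) σ T := by
  set a : ℕ → ℕ := fun p => if hp : p < k then σ ⟨p, hp⟩ else 0
  have ha : ∀ p < k, a p ≤ p + d ∧ p ≤ a p + d := fun p hp => by
    simpa only [a, dif_pos hp] using hd ⟨p, hp⟩
  set M : ℕ → Fin k → Fin k :=
    fun t p => ⟨swapRound k t (sortState k a t) p, swapRound_lt _ p.2⟩
  have hM : ∀ t, IsMatchingPerm (pathGraph k) (M t) := fun t =>
    ⟨fun p => Fin.ext (swapRound_swapRound _ _ _ _), fun p => by
      rw [pathGraph_adj, Fin.ext_iff]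
      exact swapRound_mem k t (sortState k a t) p⟩
  have hval : ∀ T (p : Fin k),
      (routeSeq σ (List.ofFn fun t : Fin T => M t) p).val = sortState k a T p := by
    intro T
    induction T with
    | zero => intro p; simp [routeSeq_nil, a, sortState]
    | succ T ih =>
      intro p
      rw [List.ofFn_succ', routeSeq_concat, comp_apply]
      simp only [Fin.val_castSucc]
      rw [ih]
      rfl
  refine ⟨fun t => M t, fun m hm => ?_, ?_⟩
  · obtain ⟨t, rfl⟩ := List.mem_ofFn.mp hm
    exact hM t
  · refine Fin.eq_id_of_injective_of_le_succ ?_ fun p q hpq => ?_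
    · refine routeSeq_injective hσ fun m hm => ?_
      obtain ⟨t, rfl⟩ := List.mem_ofFn.mp hm
      exact (hM t).injective
    · rw [Fin.le_iff_val_le_val, hval, hval, hpq]
      exact sortState_sorted ha hT (hpq ▸ q.2)

theorem solvableIn_pathGraph_of_injective {k : ℕ} {σ : Fin k → Fin k} (hσ : Injective σ) :
    SolvableIn (pathGraph k) σ k :=
  solvableIn_pathGraph (d := k) hσ (fun p => ⟨by omega, by omega⟩) (min_le_left _ _)

section BoxProdPath

variable {α β : Type*}

lemma solvableIn_boxProd_pathGraph_of_snd_eq {k : ℕ} (H : SimpleGraph β)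
    {C : Fin k × β → Fin k × β} (hinj : Injective C) (hC : ∀ v, (C v).2 = v.2) :
    SolvableIn (pathGraph k □ H) C k :=
  SolvableIn.boxProd_of_snd_eq H hC fun b => solvableIn_pathGraph_of_injective fun a a' e =>
    congrArg Prod.fst (hinj (Prod.ext e ((hC (a, b)).trans (hC (a', b)).symm)))

lemma solvableIn_boxProd_pathGraph_of_fst_eq {k d : ℕ} (G : SimpleGraph α)
    {C : α × Fin k → α × Fin k} (hinj : Injective C) (hC : ∀ v, (C v).1 = v.1)
    (hd : ∀ v, ((C v).2 : ℕ) ≤ v.2 + d ∧ (v.2 : ℕ) ≤ (C v).2 + d) :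
    SolvableIn (G □ pathGraph k) C (2 * d) :=
  SolvableIn.boxProd_of_fst_eq G hC fun a => solvableIn_pathGraph
    (fun b b' e => congrArg Prod.snd (hinj (Prod.ext ((hC (a, b)).trans (hC (a, b')).symm) e)))
    (fun b => hd (a, b)) (min_le_right _ _)

end BoxProdPath

section Konig

variable {α β : Type*} [Fintype β] [DecidableEq β]

lemma exists_section_of_card_fiber {f g : α → β} {A : Finset α} {m : ℕ} (hm : 0 < m)
    (hf : ∀ b, #{a ∈ A | f a = b} = m) (hg : ∀ b, #{a ∈ A | g a = b} = m) :
    ∃ s : β → α, (∀ b, s b ∈ A ∧ f (s b) = b) ∧ Injective (g ∘ s) := by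
  classical
  obtain ⟨τ, hτ, hr⟩ := (Fintype.all_card_le_filter_rel_iff_exists_injective
    fun b c => ∃ a ∈ A, f a = b ∧ g a = c).mp fun S => by
      set U : Finset β := {c | ∃ b ∈ S, ∃ a ∈ A, f a = b ∧ g a = c}
      have hsub : {a ∈ A | f a ∈ S} ⊆ {a ∈ A | g a ∈ U} := fun a ha => by
        simp only [mem_filter, U, mem_univ, true_and] at ha ⊢
        exact ⟨ha.1, f a, ha.2, a, ha.1, rfl, rfl⟩
      have := card_le_card hsub
      rw [← sum_card_fiberwise_eq_card_filter, ← sum_card_fiberwise_eq_card_filter] at this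
      simp only [hf, hg, sum_const, smul_eq_mul] at this
      exact Nat.le_of_mul_le_mul_right this hm
  choose s hs using hr
  refine ⟨s, fun b => ⟨(hs b).1, (hs b).2.1⟩, fun b b' e => hτ ?_⟩
  rw [← (hs b).2.2, ← (hs b').2.2]
  exact e

lemma card_fiber_sdiff_image_add_one [DecidableEq α] {k : α → β} {A : Finset α} {s : β → α}
    (hs : ∀ b, s b ∈ A) (hk : Bijective (k ∘ s)) (c : β) :
    #{a ∈ A \ univ.image s | k a = c} + 1 = #{a ∈ A | k a = c} := by
  obtain ⟨b, hb⟩ := hk.2 c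
  have : {a ∈ A | k a = c} = insert (s b) {a ∈ A \ univ.image s | k a = c} := by
    ext a
    simp only [mem_filter, mem_insert, mem_sdiff, mem_image, mem_univ, true_and]
    constructor
    · rintro ⟨ha, rfl⟩
      by_cases h : ∃ b', s b' = a
      · obtain ⟨b', rfl⟩ := h
        exact Or.inl (congrArg s (hk.1 hb.symm))
      · exact Or.inr ⟨⟨ha, h⟩, rfl⟩
    · rintro (rfl | ⟨⟨ha, -⟩, hka⟩)
      · exact ⟨hs b, hb⟩
      · exact ⟨ha, hka⟩
  rw [this, card_insert_of_notMem (by simp)]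

/-- König's edge-colouring theorem for the `m`-regular bipartite multigraph with an edge
`f a — g a` for each `a ∈ A`. -/
theorem exists_injOn_of_card_fiber (f g : α → β) (m : ℕ) :
    ∀ A : Finset α, (∀ b, #{a ∈ A | f a = b} = m) → (∀ b, #{a ∈ A | g a = b} = m) →
      ∃ φ : α → ℕ, (∀ a ∈ A, φ a < m) ∧ Set.InjOn (fun a => (φ a, f a)) A ∧
        Set.InjOn (fun a => (φ a, g a)) A := by
  classical
  induction m with
  | zero =>
    intro A hf _
    obtain rfl : A = ∅ := eq_empty_of_forall_notMem fun a ha => by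
      have := hf (f a)
      rw [card_eq_zero, filter_eq_empty_iff] at this
      exact this ha rfl
    exact ⟨fun _ => 0, by simp, by simp, by simp⟩
  | succ m ih =>
    intro A hf hg
    obtain ⟨s, hs, hgs⟩ := exists_section_of_card_fiber m.succ_pos hf hg
    have hfs : Bijective (f ∘ s) := (Finite.injective_iff_bijective.mp fun b b' e => by
      simpa [(hs b).2, (hs b').2] using e)
    set A' := A \ univ.image s
    have fiber' : ∀ k : α → β, Bijective (k ∘ s) → (∀ b, #{a ∈ A | k a = b} = m + 1) →
        ∀ b, #{a ∈ A' | k a = b} = m := fun k hk hkA b => by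
      have := card_fiber_sdiff_image_add_one (fun b => (hs b).1) hk b
      rw [hkA b] at this
      exact Nat.add_right_cancel this
    obtain ⟨φ, hφ, hφf, hφg⟩ := ih A' (fiber' f hfs hf)
      (fiber' g (Finite.injective_iff_bijective.mp hgs) hg)
    have hA' : ∀ a ∈ A, a ∉ univ.image s → a ∈ A' := fun a ha h => mem_sdiff.mpr ⟨ha, h⟩
    -- the new colour `m` goes to the perfect matching `s`
    set ψ : α → ℕ := fun a => if a ∈ univ.image s then m else φ a
    have key : ∀ k : α → β, Injective (k ∘ s) → Set.InjOn (fun a => (φ a, k a)) A' →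
        Set.InjOn (fun a => (ψ a, k a)) A := fun k hk hφk a ha a' ha' e => by
      simp only [ψ, Prod.mk.injEq] at e
      by_cases h : a ∈ univ.image s <;> by_cases h' : a' ∈ univ.image s <;>
        simp only [h, h', if_true, if_false] at e
      · obtain ⟨⟨b, -, rfl⟩, ⟨b', -, rfl⟩⟩ := And.intro (mem_image.mp h) (mem_image.mp h')
        exact congrArg s (hk e.2)
      · exact absurd e.1 (hφ a' (hA' a' ha' h')).ne'
      · exact absurd e.1 (hφ a (hA' a ha h)).ne
      · exact hφk (hA' a ha h) (hA' a' ha' h') (Prod.ext e.1 e.2)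
    refine ⟨ψ, fun a ha => ?_, key f hfs.1 hφf, key g hgs hφg⟩
    by_cases h : a ∈ univ.image s
    · simp only [ψ, if_pos h]; omega
    · simp only [ψ, if_neg h]; exact (hφ a (hA' a ha h)).trans (Nat.lt_succ_self m)

end Konig

lemma gridGraph_eq_boxProd (h n : ℕ) : gridGraph h n = pathGraph h □ pathGraph n := by
  ext u v
  simp only [gridGraph, fromRel_adj, boxProd_adj, pathGraph_adj, ne_eq, Prod.ext_iff, Fin.ext_iff]
  omega

lemma SimpleGraph.Walk.le_add_length {V : Type*} {G : SimpleGraph V} {f : V → ℕ}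
    (hf : ∀ u v, G.Adj u v → f u ≤ f v + 1) {u v : V} (p : G.Walk u v) :
    f u ≤ f v + p.length := by
  induction p with
  | nil => simp
  | cons hadj p ih => have := hf _ _ hadj; rw [Walk.length_cons]; omega

lemma SimpleGraph.Reachable.le_add_dist {V : Type*} {G : SimpleGraph V} {f : V → ℕ}
    (hf : ∀ u v, G.Adj u v → f u ≤ f v + 1) {u v : V} (h : G.Reachable u v) :
    f u ≤ f v + G.dist u v := by
  obtain ⟨p, hp⟩ := h.exists_walk_length_eq_dist
  exact hp ▸ p.le_add_length hf

lemma gridGraph_snd_le_add_dist {h n : ℕ} (u v : Fin h × Fin n) :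
    (u.2 : ℕ) ≤ v.2 + (gridGraph h n).dist u v := by
  rw [gridGraph_eq_boxProd]
  refine ((pathGraph_preconnected h).boxProd (pathGraph_preconnected n) u v).le_add_dist
    (f := fun w => (w.2 : ℕ)) fun u v huv => ?_
  rw [boxProd_adj, pathGraph_adj, pathGraph_adj] at huv
  rcases huv with ⟨-, e⟩ | ⟨e, -⟩
  · rw [e]; omega
  · omega

lemma exists_intermediate_row {h n : ℕ} (C : Fin h × Fin n ≃ Fin h × Fin n) :
    ∃ row : Fin h × Fin n → Fin h,
      Injective (fun v => (row v, v.2)) ∧ Injective (fun v => (row v, (C v).2)) := by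
  classical
  have hcol : ∀ c, #{v : Fin h × Fin n | v.2 = c} = h := fun c => by
    rw [show ({v : Fin h × Fin n | v.2 = c} : Finset _) = univ ×ˢ {c} by
        ext ⟨r, c'⟩; simp [eq_comm],
      card_product, card_univ, Fintype.card_fin, card_singleton, mul_one]
  have hdest : ∀ c, #{v : Fin h × Fin n | (C v).2 = c} = h := fun c =>
    (card_equiv C fun v => by simp).trans (hcol c)
  obtain ⟨φ, hφ, hφcol, hφdest⟩ := exists_injOn_of_card_fiber _ _ h univ hcol hdest
  refine ⟨fun v => ⟨φ v, hφ v (mem_univ v)⟩, fun v w e => hφcol (mem_univ v) (mem_univ w) ?_,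
    fun v w e => hφdest (mem_univ v) (mem_univ w) ?_⟩ <;>
  · simp only [Prod.mk.injEq, Fin.mk.injEq] at e ⊢
    exact e

theorem solvableIn_grid {h n d : ℕ} (C : Fin h × Fin n ≃ Fin h × Fin n)
    (hd : ∀ v, ((C v).2 : ℕ) ≤ v.2 + d ∧ (v.2 : ℕ) ≤ (C v).2 + d) :
    SolvableIn (pathGraph h □ pathGraph n) C (h + 2 * d + h) := by
  obtain ⟨row, hΨ, hΘ⟩ := exists_intermediate_row C
  let Ψ := Equiv.ofBijective _ (Finite.injective_iff_bijective.mp hΨ)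
  let Θ := Equiv.ofBijective _ (Finite.injective_iff_bijective.mp hΘ)
  -- a column phase `Ψ`, a row phase `Θ ∘ Ψ⁻¹` and a column phase `C ∘ Θ⁻¹`
  have hC : ⇑C = (C ∘ Θ.symm) ∘ (Θ ∘ Ψ.symm) ∘ Ψ := by
    funext v
    simp
  rw [hC]
  refine ((solvableIn_boxProd_pathGraph_of_snd_eq _ Ψ.injective fun v => rfl).comp
    (solvableIn_boxProd_pathGraph_of_fst_eq _ (Θ.injective.comp Ψ.symm.injective)
      (fun v => show (Ψ (Ψ.symm v)).1 = v.1 by rw [Ψ.apply_symm_apply]) fun v => ?_)).comp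
    (solvableIn_boxProd_pathGraph_of_snd_eq _ (C.injective.comp Θ.symm.injective)
      fun v => show (Θ (Θ.symm v)).2 = v.2 by rw [Θ.apply_symm_apply])
  have := hd (Ψ.symm v)
  rw [show (Ψ.symm v).2 = v.2 from (Prod.ext_iff.mp (Ψ.apply_symm_apply v)).2] at this
  exact this

theorem stmt_17_general (h n : ℕ) (C : Fin h × Fin n ≃ Fin h × Fin n) :
    ∃ ms : List (Fin h × Fin n → Fin h × Fin n),
      Solves (gridGraph h n) (⇑C) ms ∧
      ms.length ≤
        2 * (Finset.univ.sup fun v : Fin h × Fin n => (gridGraph h n).dist v (C v)) +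
          2 * h := by
  set d := Finset.univ.sup fun v : Fin h × Fin n => (gridGraph h n).dist v (C v)
  have hd : ∀ v, (gridGraph h n).dist v (C v) ≤ d := fun v =>
    le_sup (f := fun v => (gridGraph h n).dist v (C v)) (mem_univ v)
  have hcol : ∀ v, ((C v).2 : ℕ) ≤ v.2 + d ∧ (v.2 : ℕ) ≤ (C v).2 + d := fun v => by
    have h₁ := gridGraph_snd_le_add_dist (C v) v
    have h₂ := gridGraph_snd_le_add_dist v (C v)
    rw [dist_comm] at h₁
    have := hd v
    omega
  obtain ⟨ms, hms⟩ := solvableIn_grid C hcol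
  rw [← gridGraph_eq_boxProd] at hms
  exact ⟨List.ofFn ms, hms, by rw [List.length_ofFn]; omega⟩

/-- on the `h × n` grid with `h ≤ n`, every configuration `C` admits a
solution of length at most `2 · d_max + 2h`, where
`d_max = max_v dist_G(v, C v)`; in particular (since `d_max ≤ OPT`) a solution of length
at most `2·OPT + 2h` always exists. -/
theorem stmt_17 (h n : ℕ) (hhn : h ≤ n) (C : Fin h × Fin n ≃ Fin h × Fin n) :
    ∃ ms : List (Fin h × Fin n → Fin h × Fin n),
      Solves (gridGraph h n) (⇑C) ms ∧
      ms.length ≤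
        2 * (Finset.univ.sup fun v : Fin h × Fin n => (gridGraph h n).dist v (C v)) +
          2 * h :=
  stmt_17_general h n C
end

section
/- Let G be a subdivided star: a tree consisting of h ≥ 3 paths (branches) B_1,…,B_h joined at a single common endpoint v_0, where B_b denotes the set of non-center vertices of branch b. For a configuration C on G, say a token t ≠ v_0 is on the wrong branch if its destination vertex t lies in B_b but its current vertex C^{-1}(t) does not lie in B_b. Then every sequence of matchings solving the instance (G,C) has length at least the number of tokens on the wrong branch. -/
/-- The vertex set of a subdivided star with `h` branches, branch `b` having `nb b`
non-center vertices: `none` is the center `v₀`, and `some ⟨b, i⟩` is the vertex `v_{b,i+1}`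
of branch `b` at distance `i + 1` from the center. -/
abbrev StarV (h : ℕ) (nb : Fin h → ℕ) := Option ((b : Fin h) × Fin (nb b))

/-- The subdivided star graph: the center is adjacent to the first vertex of every branch,
and consecutive vertices of every branch are adjacent. -/
def subStar (h : ℕ) (nb : Fin h → ℕ) : SimpleGraph (StarV h nb) :=
  SimpleGraph.fromRel fun u v =>
    (∃ (b : Fin h) (hb : 0 < nb b), u = none ∧ v = some ⟨b, ⟨0, hb⟩⟩) ∨
    (∃ (b : Fin h) (i j : Fin (nb b)), u = some ⟨b, i⟩ ∧ v = some ⟨b, j⟩ ∧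
      i.val + 1 = j.val)

/-- The token `t` is on the wrong branch in the configuration `C`: its destination vertex
`t` lies in branch `b` but its current vertex `C⁻¹ t` does not. -/
def OnWrongBranch {h : ℕ} {nb : Fin h → ℕ} (C : StarV h nb ≃ StarV h nb)
    (t : StarV h nb) : Prop :=
  ∃ (b : Fin h) (i : Fin (nb b)), t = some ⟨b, i⟩ ∧ ∀ j : Fin (nb b), C.symm t ≠ some ⟨b, j⟩

/-!
A token on the wrong branch must enter its destination branch, and the only way into a branch
from outside is through the center `v₀`. So each such token stands on `v₀` at some time step
before the end, and since two tokens never share a vertex, distinct wrong-branch tokens use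
distinct time steps.
-/

section Matchings

variable {V : Type*}

/-- The vertex reached from `v` by applying the matchings of `ms` in order, head first:
it is where the token starting on `v` ends up. -/
def posAfter (ms : List (V → V)) (v : V) : V := ms.foldl (fun w m => m w) v

lemma posAfter_cons (m : V → V) (ms : List (V → V)) (v : V) :
    posAfter (m :: ms) v = posAfter ms (m v) := rfl

lemma foldr_comp_posAfter {ms : List (V → V)} (hms : ∀ m ∈ ms, Function.Involutive m)
    (v : V) : ms.foldr (· ∘ ·) id (posAfter ms v) = v := by
  induction ms generalizing v with
  | nil => rfl
  | cons m ms ih =>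
    simp only [List.foldr_cons, Function.comp_apply, posAfter_cons,
      ih fun m' hm' => hms m' (List.mem_cons_of_mem _ hm')]
    exact hms m List.mem_cons_self v

lemma posAfter_injective {ms : List (V → V)} (hms : ∀ m ∈ ms, Function.Involutive m) :
    Function.Injective (posAfter ms) := by
  induction ms with
  | nil => exact fun _ _ h => h
  | cons m ms ih =>
    intro u v huv
    exact (hms m List.mem_cons_self).injective
      (ih (fun m' hm' => hms m' (List.mem_cons_of_mem _ hm')) huv)

lemma Solves.posAfter_symm {G : SimpleGraph V} {C : V ≃ V} {ms : List (V → V)}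
    (hsol : Solves G C ms) (t : V) : posAfter ms (C.symm t) = t := by
  have hinv : ∀ m ∈ ms, Function.Involutive m := fun m hm => (hsol.1 m hm).1
  have := congrFun hsol.2 (posAfter ms (C.symm t))
  rw [routeSeq, Function.comp_apply, foldr_comp_posAfter hinv, Equiv.apply_symm_apply] at this
  exact this.symm

/-- `hS` says that `S` can be entered from outside only through `c`. -/
lemma exists_posAfter_take_eq_of_mem {G : SimpleGraph V} {S : Set V} {c : V}
    (hS : ∀ u v, u ∉ S → v ∈ S → G.Adj u v → u = c)
    {ms : List (V → V)} (hms : ∀ m ∈ ms, IsMatchingPerm G m)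
    {u : V} (hu : u ∉ S) (hend : posAfter ms u ∈ S) :
    ∃ j < ms.length, posAfter (ms.take j) u = c := by
  induction ms generalizing u with
  | nil => exact absurd hend hu
  | cons m ms ih =>
    by_cases hmu : m u ∈ S
    · have hadj : G.Adj u (m u) :=
        ((hms m List.mem_cons_self).2 u).resolve_left fun h => hu (h ▸ hmu)
      exact ⟨0, Nat.succ_pos _, hS u (m u) hu hmu hadj⟩
    · obtain ⟨j, hj, hjc⟩ := ih (fun m' hm' => hms m' (List.mem_cons_of_mem _ hm')) hmu hend
      exact ⟨j + 1, Nat.succ_lt_succ hj, hjc⟩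

/-- Only one token stands on `c` at a time, so distinct tokens visit `c` at distinct steps. -/
lemma card_le_length_of_visit {ι : Type*} [Finite ι] {ms : List (V → V)}
    (hms : ∀ m ∈ ms, Function.Involutive m) {f : ι → V} (hf : Function.Injective f) (c : V)
    (hvisit : ∀ i, ∃ j < ms.length, posAfter (ms.take j) (f i) = c) :
    Nat.card ι ≤ ms.length := by
  choose j hj hjc using hvisit
  have hinj : Function.Injective fun i => (⟨j i, hj i⟩ : Fin ms.length) := by
    intro i i' hii'
    have hji : j i = j i' := Fin.mk.inj_iff.mp hii'
    have htake : ∀ m ∈ ms.take (j i), Function.Involutive m :=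
      fun m hm => hms m (List.mem_of_mem_take hm)
    refine hf (posAfter_injective htake ?_)
    rw [hjc i, hji, hjc i']
  simpa using Nat.card_le_card_of_injective _ hinj

end Matchings

lemma subStar_adj_branch {h : ℕ} {nb : Fin h → ℕ} {b : Fin h} {i : Fin (nb b)}
    {u : StarV h nb} (hadj : (subStar h nb).Adj u (some ⟨b, i⟩)) :
    u = none ∨ ∃ j : Fin (nb b), u = some ⟨b, j⟩ := by
  rw [subStar, SimpleGraph.fromRel_adj] at hadj
  rcases hadj.2 with (⟨_, _, hu, _⟩ | ⟨_, j, _, hu, hv, _⟩) | (⟨_, _, hu, _⟩ | ⟨_, _, j, hu, hv, _⟩)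
  · exact Or.inl hu
  · obtain ⟨rfl, _⟩ := Sigma.mk.inj_iff.mp (Option.some.inj hv)
    exact Or.inr ⟨j, hu⟩
  · simp at hu
  · obtain ⟨rfl, _⟩ := Sigma.mk.inj_iff.mp (Option.some.inj hu)
    exact Or.inr ⟨j, hv⟩

lemma subStar_eq_none_of_adj_branch {h : ℕ} {nb : Fin h → ℕ} (b : Fin h) (u v : StarV h nb)
    (hu : u ∉ {w | ∃ j : Fin (nb b), w = some ⟨b, j⟩})
    (hv : v ∈ {w | ∃ j : Fin (nb b), w = some ⟨b, j⟩}) (hadj : (subStar h nb).Adj u v) :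
    u = none := by
  obtain ⟨i, rfl⟩ := hv
  exact (subStar_adj_branch hadj).resolve_right hu

theorem stmt_18_general (h : ℕ) (nb : Fin h → ℕ)
    (C : StarV h nb ≃ StarV h nb) (ms : List (StarV h nb → StarV h nb))
    (hms : Solves (subStar h nb) (⇑C) ms) :
    Nat.card {t : StarV h nb // OnWrongBranch C t} ≤ ms.length := by
  refine card_le_length_of_visit (fun m hm => (hms.1 m hm).1)
    (f := fun t : {t // OnWrongBranch C t} => C.symm t.1)
    (fun t t' htt' => Subtype.ext (C.symm.injective htt')) none ?_
  rintro ⟨t, b, i, rfl, hwrong⟩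
  refine exists_posAfter_take_eq_of_mem (subStar_eq_none_of_adj_branch b) hms.1
    (fun ⟨j, hj⟩ => hwrong j hj) ?_
  exact ⟨i, hms.posAfter_symm _⟩

/-- on a subdivided star with `h ≥ 3` (nonempty) branches, every solution of
the instance `(G, C)` has length at least the number of tokens on the wrong branch. -/
theorem stmt_18 (h : ℕ) (hh : 3 ≤ h) (nb : Fin h → ℕ) (hnb : ∀ b, 1 ≤ nb b)
    (C : StarV h nb ≃ StarV h nb) (ms : List (StarV h nb → StarV h nb))
    (hms : Solves (subStar h nb) (⇑C) ms) :
    Nat.card {t : StarV h nb // OnWrongBranch C t} ≤ ms.length :=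
  stmt_18_general h nb C ms hms
end

section
/- Let G be a subdivided star with center v_0 and branches B_1,…,B_h, where the vertices of branch b are v_{b,1},…,v_{b,n_b} ordered by increasing distance from v_0. Call a configuration D branch-sorted if for every branch b and all 1 ≤ i < j ≤ n_b: if the token D(v_{b,i}) has its destination vertex in B_b, then the token D(v_{b,j}) also has its destination vertex in B_b (that is, on every branch, all tokens that do not belong to that branch are closer to the center than all tokens that do). If the instance (G,C) has a solution of length k, then there exists a sequence of at most k matchings, none of which contains an edge incident to v_0, that routes C to some branch-sorted configuration. -/
/-- A configuration `D` on the subdivided star is branch-sorted: on every branch `b`, if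
the token at `v_{b,i}` belongs to branch `b` (its destination lies in `B_b`), then so does
the token at every vertex `v_{b,j}` farther from the center (`i < j`). -/
def BranchSorted {h : ℕ} {nb : Fin h → ℕ} (D : StarV h nb → StarV h nb) : Prop :=
  ∀ (b : Fin h) (i j : Fin (nb b)), i < j →
    (∃ i' : Fin (nb b), D (some ⟨b, i⟩) = some ⟨b, i'⟩) →
    ∃ j' : Fin (nb b), D (some ⟨b, j⟩) = some ⟨b, j'⟩

namespace StarRouting

open Classical

section Word

variable (w : ℕ → Prop)

/- `w j` says that position `j` of a branch (`0` being next to the center) holds a foreign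
token; such a token swaps toward the center whenever the position there holds a home token. -/
noncomputable def swapPartner (j : ℕ) : ℕ :=
  if ¬ w j ∧ w (j + 1) then j + 1 else if j ≠ 0 ∧ w j ∧ ¬ w (j - 1) then j - 1 else j

def sortStep : ℕ → Prop := fun j => w (swapPartner w j)

theorem swapPartner_involutive : Function.Involutive (swapPartner w) := by
  intro j
  unfold swapPartner
  split_ifs <;> grind

theorem swapPartner_eq_or (j : ℕ) :
    swapPartner w j = j ∨ swapPartner w j = j + 1 ∨ swapPartner w j + 1 = j := by
  unfold swapPartner
  split_ifs <;> omega

variable {w}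

theorem swapPartner_lt {n : ℕ} (hw : ∀ j, w j → j < n) {j : ℕ} (hj : j < n) :
    swapPartner w j < n := by
  unfold swapPartner
  split_ifs <;> grind

theorem sortStep_lt {n : ℕ} (hw : ∀ j, w j → j < n) {j : ℕ} (hj : sortStep w j) :
    j < n := by
  unfold sortStep swapPartner at hj
  split_ifs at hj <;> grind

theorem iterate_sortStep_lt {n : ℕ} (hw : ∀ j, w j → j < n) (t : ℕ) {j : ℕ}
    (hj : (sortStep^[t] w) j) : j < n := by
  induction t generalizing j with
  | zero => exact hw j hj
  | succ t ih =>
    rw [Function.iterate_succ_apply'] at hj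
    exact sortStep_lt (fun _ => ih) hj

variable (w)

theorem count_sortStep (p : ℕ) :
    Nat.count (sortStep w) p =
      Nat.count w p + if p ≠ 0 ∧ w p ∧ ¬ w (p - 1) then 1 else 0 := by
  induction p with
  | zero => simp
  | succ p ih =>
    rw [Nat.count_succ, Nat.count_succ, ih]
    unfold sortStep swapPartner
    rcases p with _ | p
    · by_cases h0 : w 0 <;> by_cases h1 : w 1 <;> simp [h0, h1]
    · by_cases h0 : w p <;> by_cases h1 : w (p + 1) <;> by_cases h2 : w (p + 2) <;>
        simp [h0, h1, h2]

theorem min_le_count_sortStep (p : ℕ) :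
    min p (min (Nat.count w (p + 1)) (Nat.count w (p - 1) + 1)) ≤ Nat.count (sortStep w) p := by
  rw [count_sortStep, Nat.count_succ]
  rcases p with _ | p
  · simp
  · rw [show p + 1 - 1 = p by rfl, Nat.count_succ]
    by_cases h0 : w p <;> by_cases h1 : w (p + 1) <;> simp [h0, h1]

variable {w}

theorem count_sortStep_of_not {p : ℕ} (hp : ¬ w p) :
    Nat.count (sortStep w) p = Nat.count w p := by
  simp [count_sortStep, hp]

theorem count_iterate_sortStep {n : ℕ} (hw : ∀ j, w j → j < n) (t : ℕ) :
    Nat.count (sortStep^[t] w) n = Nat.count w n := by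
  induction t with
  | zero => rfl
  | succ t ih =>
    rw [Function.iterate_succ_apply',
      count_sortStep_of_not fun h => (iterate_sortStep_lt hw t h).false, ih]

theorem count_eq_of_le {n q : ℕ} (hw : ∀ j, w j → j < n) (hnq : n ≤ q) :
    Nat.count w q = Nat.count w n := by
  obtain ⟨r, rfl⟩ := Nat.exists_eq_add_of_le hnq
  rw [Nat.count_add, (Nat.count_iff_forall_not (p := fun m => w (n + m))).2
    fun m _ h => (hw _ h).not_ge (by omega), add_zero]

theorem count_add_le (a b : ℕ) : Nat.count w (a + b) ≤ Nat.count w a + b := by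
  rw [Nat.count_add]
  exact Nat.add_le_add_left (Nat.count_le _) _

theorem le_count_iterate_sortStep (t : ℕ) {B p : ℕ} (hBp : B ≤ p)
    (hs : ∀ s ≤ t, B ≤ s + Nat.count w (p + t - 2 * s)) :
    B ≤ Nat.count (sortStep^[t] w) p := by
  induction t generalizing B p with
  | zero => exact (by simpa using hs 0 le_rfl : B ≤ Nat.count w p)
  | succ t ih =>
    rw [Function.iterate_succ_apply']
    have hright : B ≤ Nat.count (sortStep^[t] w) (p + 1) :=
      ih (by omega) fun s hst => by
        simpa [show p + 1 + t - 2 * s = p + (t + 1) - 2 * s by omega] using hs s (by omega)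
    have hleft : B ≤ Nat.count (sortStep^[t] w) (p - 1) + 1 := by
      rcases Nat.eq_zero_or_pos B with rfl | hB
      · omega
      have := ih (B := B - 1) (p := p - 1) (by omega) fun s hst => by
        have := hs (s + 1) (by omega)
        rw [show p + (t + 1) - 2 * (s + 1) = p - 1 + t - 2 * s by omega] at this
        omega
      omega
    have := min_le_count_sortStep (sortStep^[t] w) p
    omega

theorem min_le_count_iterate_sortStep {k : ℕ} (hw : ∀ j, w j → j < k) (p : ℕ) :
    min p (Nat.count w k) ≤ Nat.count (sortStep^[k] w) p := by
  refine le_count_iterate_sortStep k (min_le_left _ _) fun s hs => ?_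
  rcases le_or_gt k (p + k - 2 * s) with hq | hq
  · rw [count_eq_of_le hw hq]
    omega
  · have := count_add_le (w := w) (p + k - 2 * s) (k - (p + k - 2 * s))
    rw [Nat.add_sub_cancel' hq.le] at this
    omega

theorem iterate_sortStep_of_le {k : ℕ} (hw : ∀ j, w j → j < k) {i j : ℕ} (hij : i ≤ j)
    (hj : (sortStep^[k] w) j) : (sortStep^[k] w) i := by
  have hjk : j + 1 ≤ k := iterate_sortStep_lt hw k hj
  have hsucc := Nat.count_succ_eq_succ_count_iff.2 hj
  have hmono := Nat.count_monotone (sortStep^[k] w) hjk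
  have hstable := count_iterate_sortStep hw k
  have hmin := min_le_count_iterate_sortStep hw j
  have hfull : Nat.count (sortStep^[k] w) j = j := by
    have := Nat.count_le (sortStep^[k] w) (n := j)
    omega
  rcases hij.lt_or_eq with hlt | rfl
  · exact Nat.count_iff_forall.1 hfull i hlt
  · exact hj

end Word

theorem le_add_length_of_isMatchingPerm {V : Type*} {G : SimpleGraph V} (f : V → ℕ)
    (hf : ∀ u v, G.Adj u v → f v ≤ f u + 1) {ms : List (V → V)}
    (hms : ∀ m ∈ ms, IsMatchingPerm G m) (v : V) :
    f (ms.foldr (· ∘ ·) id v) ≤ f v + ms.length := by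
  induction ms with
  | nil => simp
  | cons m ms ih =>
    have ih := ih fun m' hm' => hms m' (List.mem_cons_of_mem _ hm')
    have hstep : f (m (ms.foldr (· ∘ ·) id v)) ≤ f (ms.foldr (· ∘ ·) id v) + 1 := by
      rcases (hms m List.mem_cons_self).2 (ms.foldr (· ∘ ·) id v) with hfix | hadj
      · rw [hfix]; omega
      · exact hf _ _ hadj
    simp only [List.foldr_cons, Function.comp_apply, List.length_cons]
    omega

section Star

variable {h : ℕ} {nb : Fin h → ℕ}

/-- Position `j` of branch `b` (at distance `j + 1` from the center) holds a token whose
destination is not on `b`. -/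
def Foreign (D : StarV h nb → StarV h nb) (b : Fin h) (j : ℕ) : Prop :=
  ∃ hj : j < nb b, ¬ ∃ i, D (some ⟨b, ⟨j, hj⟩⟩) = some ⟨b, i⟩

theorem Foreign.lt {D : StarV h nb → StarV h nb} {b : Fin h} {j : ℕ} (hj : Foreign D b j) :
    j < nb b :=
  hj.1

theorem subStar_adj_of_succ_eq {b : Fin h} {i j : Fin (nb b)} (hij : i.val + 1 = j.val) :
    (subStar h nb).Adj (some ⟨b, i⟩) (some ⟨b, j⟩) := by
  rw [subStar, SimpleGraph.fromRel_adj]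
  refine ⟨fun heq => ?_, Or.inl (Or.inr ⟨b, i, j, rfl, rfl, hij⟩)⟩
  simp only [Option.some.injEq, Sigma.mk.injEq, heq_eq_eq, true_and] at heq
  omega

noncomputable def starSwap (D : StarV h nb → StarV h nb) : StarV h nb → StarV h nb
  | none => none
  | some ⟨b, i⟩ =>
    some ⟨b, ⟨swapPartner (Foreign D b) i, swapPartner_lt (fun _ => Foreign.lt) i.isLt⟩⟩

theorem starSwap_isMatchingPerm (D : StarV h nb → StarV h nb) :
    IsMatchingPerm (subStar h nb) (starSwap D) := by
  refine ⟨?_, ?_⟩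
  · rintro (_ | ⟨b, i⟩)
    · rfl
    · simp only [starSwap, Option.some.injEq, Sigma.mk.injEq, heq_eq_eq, true_and]
      exact Fin.ext (swapPartner_involutive _ _)
  · rintro (_ | ⟨b, i⟩)
    · exact Or.inl rfl
    · rcases swapPartner_eq_or (Foreign D b) i with hfix | hup | hdown
      · exact Or.inl (by simp only [starSwap, hfix])
      · exact Or.inr (subStar_adj_of_succ_eq hup.symm)
      · exact Or.inr (subStar_adj_of_succ_eq hdown).symm

theorem foreign_comp_starSwap (D : StarV h nb → StarV h nb) (b : Fin h) :
    Foreign (D ∘ starSwap D) b = sortStep (Foreign D b) := by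
  funext j
  apply propext
  by_cases hj : j < nb b
  · exact ⟨fun ⟨_, hnot⟩ => ⟨_, hnot⟩, fun ⟨_, hnot⟩ => ⟨hj, hnot⟩⟩
  · exact ⟨fun hf => absurd hf.lt hj,
      fun hf => absurd (sortStep_lt (fun _ => Foreign.lt) hf) hj⟩

def branchDepth (b : Fin h) : StarV h nb → ℕ
  | none => 0
  | some ⟨c, i⟩ => if c = b then i.val + 1 else 0

theorem branchDepth_le_of_adj (b : Fin h) {u v : StarV h nb} (huv : (subStar h nb).Adj u v) :
    branchDepth b v ≤ branchDepth b u + 1 := by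
  rw [subStar, SimpleGraph.fromRel_adj] at huv
  rcases huv.2 with (⟨c, _, rfl, rfl⟩ | ⟨c, i, j, rfl, rfl, hij⟩) |
      (⟨c, _, rfl, rfl⟩ | ⟨c, i, j, rfl, rfl, hij⟩) <;>
    by_cases hc : c = b <;> simp [branchDepth, hc] <;> omega

theorem Foreign.lt_length {C : StarV h nb ≃ StarV h nb} {ms : List (StarV h nb → StarV h nb)}
    (hms : Solves (subStar h nb) C ms) {b : Fin h} {j : ℕ} (hj : Foreign C b j) :
    j < ms.length := by
  obtain ⟨hjb, hnot⟩ := hj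
  set v : StarV h nb := some ⟨b, ⟨j, hjb⟩⟩
  have hreach : ms.foldr (· ∘ ·) id (C v) = v :=
    C.injective (congrFun hms.2 (C v))
  have hdepth : branchDepth b (C v) = 0 := by
    rcases hCv : C v with _ | ⟨c, i⟩
    · rfl
    · have hc : c ≠ b := by
        rintro rfl
        exact hnot ⟨i, hCv⟩
      simp [branchDepth, hc]
  have := le_add_length_of_isMatchingPerm (branchDepth b)
    (fun _ _ => branchDepth_le_of_adj b) hms.1 (C v)
  rw [hreach, hdepth] at this
  simpa [v, branchDepth] using this

noncomputable def sortingSchedule (D : StarV h nb → StarV h nb) :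
    ℕ → List (StarV h nb → StarV h nb)
  | 0 => []
  | k + 1 => starSwap D :: sortingSchedule (D ∘ starSwap D) k

theorem length_sortingSchedule (D : StarV h nb → StarV h nb) (k : ℕ) :
    (sortingSchedule D k).length = k := by
  induction k generalizing D with
  | zero => rfl
  | succ k ih => simp [sortingSchedule, ih]

theorem exists_eq_starSwap_of_mem_sortingSchedule {D : StarV h nb → StarV h nb} {k : ℕ}
    {m : StarV h nb → StarV h nb} (hm : m ∈ sortingSchedule D k) : ∃ E, m = starSwap E := by
  induction k generalizing D with
  | zero => simp [sortingSchedule] at hm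
  | succ k ih =>
    rcases List.mem_cons.1 hm with rfl | hm
    · exact ⟨D, rfl⟩
    · exact ih hm

theorem routeSeq_sortingSchedule (D : StarV h nb → StarV h nb) (k : ℕ) :
    routeSeq D (sortingSchedule D k) = (fun E => E ∘ starSwap E)^[k] D := by
  induction k generalizing D with
  | zero => rfl
  | succ k ih => exact ih (D ∘ starSwap D)

theorem foreign_iterate (D : StarV h nb → StarV h nb) (b : Fin h) (k : ℕ) :
    Foreign ((fun E => E ∘ starSwap E)^[k] D) b = sortStep^[k] (Foreign D b) :=
  Function.Semiconj.iterate_right (f := fun E => Foreign E b)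
    (fun E => foreign_comp_starSwap E b) k D

theorem branchSorted_routeSeq_sortingSchedule {C : StarV h nb ≃ StarV h nb}
    {ms : List (StarV h nb → StarV h nb)} (hms : Solves (subStar h nb) C ms) :
    BranchSorted (routeSeq C (sortingSchedule C ms.length)) := by
  intro b i j hij hi
  rw [routeSeq_sortingSchedule] at hi ⊢
  by_contra hj
  have hforeign : (sortStep^[ms.length] (Foreign C b)) j := by
    rw [← foreign_iterate]
    exact ⟨j.isLt, hj⟩
  have hprefix := iterate_sortStep_of_le (fun _ => Foreign.lt_length hms) hij.le hforeign
  rw [← foreign_iterate] at hprefix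
  exact hprefix.2 hi

end Star

end StarRouting

theorem stmt_19_general (h : ℕ) (nb : Fin h → ℕ)
    (C : StarV h nb ≃ StarV h nb) (ms : List (StarV h nb → StarV h nb))
    (hms : Solves (subStar h nb) (⇑C) ms) :
    ∃ ms' : List (StarV h nb → StarV h nb),
      ms'.length ≤ ms.length ∧
      (∀ m ∈ ms', IsMatchingPerm (subStar h nb) m ∧ m none = none) ∧
      BranchSorted (routeSeq (⇑C) ms') := by
  refine ⟨StarRouting.sortingSchedule C ms.length,
    (StarRouting.length_sortingSchedule _ _).le, fun m hm => ?_,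
    StarRouting.branchSorted_routeSeq_sortingSchedule hms⟩
  obtain ⟨E, rfl⟩ := StarRouting.exists_eq_starSwap_of_mem_sortingSchedule hm
  exact ⟨StarRouting.starSwap_isMatchingPerm E, rfl⟩

/-- on a subdivided star, if the instance `(G, C)` has a solution of length
`k`, then there is a sequence of at most `k` matchings, none containing an edge incident
to the center `v₀`, routing `C` to some branch-sorted configuration. -/
theorem stmt_19 (h : ℕ) (hh : 3 ≤ h) (nb : Fin h → ℕ) (hnb : ∀ b, 1 ≤ nb b)
    (C : StarV h nb ≃ StarV h nb) (ms : List (StarV h nb → StarV h nb))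
    (hms : Solves (subStar h nb) (⇑C) ms) :
    ∃ ms' : List (StarV h nb → StarV h nb),
      ms'.length ≤ ms.length ∧
      (∀ m ∈ ms', IsMatchingPerm (subStar h nb) m ∧ m none = none) ∧
      BranchSorted (routeSeq (⇑C) ms') :=
  stmt_19_general h nb C ms hms
end
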